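/- The mdG residual is a Radau polynomial for decoupled linear right-hand sides: Let a < b, q ≥ 1, α, β ∈ ℝ, u_a ∈ ℝ, and let U be a polynomial of degree ≤ q on [a,b] satisfying the discontinuous Galerkin orthogonality (U(a) − u_a) v(a) + ∫_a^b (U'(t) − (α U(t) + β)) v(t) dt = 0 for every polynomial v of degree ≤ q. Then the residual R(t) = U'(t) − (α U(t) + β), which is a polynomial of degree ≤ q, is a scalar multiple of the rescaled q-th Radau polynomial: R(t) = c · Q_q(σ(t)) for some c ∈ ℝ, where σ(t) = (2t − a − b)/(b − a) (so σ(a) = −1). -/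

import Mathlib

/-!
Let `R = U' - (αU + β)`. Testing the Galerkin identity with `v = (t - a) w`, `deg w < q`, kills
the jump term, so `(t - a) R(t)` is `L²(a, b)`-orthogonal to all polynomials of degree `< q`.
Pulled back to `[-1, 1]` it becomes a polynomial `T` of degree `≤ q + 1` with the same
orthogonality. Legendre polynomials are orthogonal (integrate Rodrigues' formula by parts) and an
orthogonal polynomial of degree `n` is unique up to a scalar, so `T = c P_q + d P_{q+1}`.
Finally `T(-1) = 0` and `P_n(-1) = (-1)^n` force `c = d`, i.e. `T = c (x + 1) Q_q`; as `x + 1`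
is the pull-back of `t - a` up to a constant, cancelling it leaves `R = const · Q_q ∘ σ`.
-/

open MeasureTheory intervalIntegral Polynomial

/-- The `q`-th Legendre polynomial, via Rodrigues' formula
`P_q(x) = (1/(2^q q!)) (d/dx)^q ((x² − 1)^q)`. -/
noncomputable def legendrePoly (q : ℕ) : Polynomial ℝ :=
  Polynomial.C (1 / (2 ^ q * (Nat.factorial q) : ℝ)) *
    (Polynomial.derivative^[q] ((Polynomial.X ^ 2 - 1) ^ q))

theorem intervalIntegrable_eval_mul_eval (p r : ℝ[X]) (a b : ℝ) :
    IntervalIntegrable (fun x => p.eval x * r.eval x) volume a b :=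
  (p.continuous.mul r.continuous).intervalIntegrable a b

theorem integral_derivative_eval_mul_eval (u v : ℝ[X]) (a b : ℝ) :
    ∫ x in a..b, (derivative u).eval x * v.eval x
      = u.eval b * v.eval b - u.eval a * v.eval a
        - ∫ x in a..b, u.eval x * (derivative v).eval x := by
  have := integral_mul_deriv_eq_deriv_mul (fun x _ => v.hasDerivAt x) (fun x _ => u.hasDerivAt x)
    (v.derivative.continuous.intervalIntegrable a b)
    (u.derivative.continuous.intervalIntegrable a b)
  simpa only [mul_comm (v.eval _), mul_comm (v.derivative.eval _)] using this

theorem integral_iterate_derivative_eval_mul_eval (u v : ℝ[X]) (a b : ℝ) (k : ℕ)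
    (ha : ∀ j < k, (derivative^[j] u).eval a = 0)
    (hb : ∀ j < k, (derivative^[j] u).eval b = 0) :
    ∫ x in a..b, (derivative^[k] u).eval x * v.eval x
      = (-1) ^ k * ∫ x in a..b, u.eval x * (derivative^[k] v).eval x := by
  induction k generalizing v with
  | zero => simp
  | succ k ih =>
    rw [Function.iterate_succ_apply', integral_derivative_eval_mul_eval, ha k k.lt_succ_self,
      hb k k.lt_succ_self, ih _ (fun j hj => ha j (hj.trans k.lt_succ_self))
        (fun j hj => hb j (hj.trans k.lt_succ_self)), Function.iterate_succ_apply, pow_succ]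
    ring

theorem eval_iterate_derivative_X_sub_C_pow_mul {R : Type*} [CommRing R] (c : R) (n : ℕ)
    (g : R[X]) : (derivative^[n] ((X - C c) ^ n * g)).eval c = n.factorial * g.eval c := by
  induction n generalizing g with
  | zero => simp
  | succ n ih =>
    have hd : derivative ((X - C c) ^ (n + 1) * g)
        = (X - C c) ^ n * (C ((n : R) + 1) * g + (X - C c) * derivative g) := by
      rw [derivative_mul, derivative_pow]
      simp only [derivative_sub, derivative_X, derivative_C, sub_zero, mul_one,
        Nat.add_sub_cancel, Nat.cast_add, Nat.cast_one, map_add, map_natCast, map_one]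
      ring
    rw [Function.iterate_succ_apply, hd, ih]
    simp only [map_add, map_natCast, map_one, eval_add, eval_mul, eval_natCast, eval_one, eval_sub,
      eval_X, eval_C, sub_self, zero_mul, add_zero, Nat.factorial_succ, Nat.cast_mul, Nat.cast_add,
      Nat.cast_one]
    ring

theorem eq_zero_of_integral_eval_mul_self_eq_zero {a b : ℝ} (hab : a < b) {r : ℝ[X]}
    (h : ∫ x in a..b, r.eval x * r.eval x = 0) : r = 0 := by
  have hae := (integral_eq_zero_iff_of_le_of_nonneg_ae hab.le
    (Filter.Eventually.of_forall fun x => mul_self_nonneg (r.eval x))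
    (intervalIntegrable_eval_mul_eval r r a b)).mp h
  have hzero := Measure.eqOn_Ioc_of_ae_eq volume hae
    (r.continuous.mul r.continuous).continuousOn continuousOn_const
  exact eq_zero_of_infinite_isRoot r
    ((Set.Ioc_infinite hab).mono fun x hx => mul_self_eq_zero.mp (hzero hx))

theorem degree_sub_C_mul_lt {K : Type*} [Field K] {n : ℕ} {S P : K[X]} (hS : S.natDegree ≤ n)
    (hP : P.natDegree ≤ n) (hPn : P.coeff n ≠ 0) :
    (S - C (S.coeff n / P.coeff n) * P).degree < n := by
  rw [degree_lt_iff_coeff_zero]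
  intro m hm
  rcases hm.eq_or_lt with rfl | hlt
  · rw [coeff_sub, coeff_C_mul, div_mul_cancel₀ _ hPn, sub_self]
  · rw [coeff_sub, coeff_C_mul, coeff_eq_zero_of_natDegree_lt (hS.trans_lt hlt),
      coeff_eq_zero_of_natDegree_lt (hP.trans_lt hlt), mul_zero, sub_zero]

def OrthogonalToDegreeLT (a b : ℝ) (n : ℕ) (S : ℝ[X]) : Prop :=
  ∀ w : ℝ[X], w.degree < n → ∫ x in a..b, S.eval x * w.eval x = 0

namespace OrthogonalToDegreeLT

variable {a b : ℝ} {n : ℕ} {S T : ℝ[X]}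

theorem sub (hS : OrthogonalToDegreeLT a b n S) (hT : OrthogonalToDegreeLT a b n T) :
    OrthogonalToDegreeLT a b n (S - T) := fun w hw => by
  simp only [eval_sub, sub_mul]
  rw [integral_sub (intervalIntegrable_eval_mul_eval _ _ _ _)
    (intervalIntegrable_eval_mul_eval _ _ _ _), hS w hw, hT w hw, sub_zero]

theorem C_mul (c : ℝ) (hS : OrthogonalToDegreeLT a b n S) :
    OrthogonalToDegreeLT a b n (C c * S) := fun w hw => by
  simp only [eval_mul, eval_C, mul_assoc]
  rw [intervalIntegral.integral_const_mul, hS w hw, mul_zero]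

theorem mono {m : ℕ} (hmn : m ≤ n) (hS : OrthogonalToDegreeLT a b n S) :
    OrthogonalToDegreeLT a b m S :=
  fun w hw => hS w (hw.trans_le (by exact_mod_cast hmn))

theorem comp_affine {c d x₀ x₁ : ℝ} (hc : c ≠ 0)
    (hS : OrthogonalToDegreeLT (c * x₀ + d) (c * x₁ + d) n S) :
    OrthogonalToDegreeLT x₀ x₁ n (S.comp (C c * X + C d)) := by
  intro w hw
  set σ : ℝ[X] := C c⁻¹ * X + C (-d / c)
  have hσ : (w.comp σ).degree < n := by
    rwa [degree_comp (by rw [degree_linear (inv_ne_zero hc)]; exact zero_lt_one),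
      degree_linear (inv_ne_zero hc), mul_one]
  have hchange :=
    integral_comp_mul_add (a := x₀) (b := x₁) (fun t => S.eval t * (w.comp σ).eval t) hc d
  rw [hS _ hσ, smul_zero] at hchange
  refine (integral_congr fun x _ => ?_).trans hchange
  simp only [σ, eval_comp, eval_mul, eval_add, eval_C, eval_X]
  congr 2
  field_simp
  ring

end OrthogonalToDegreeLT

-- Sends `-1 ↦ a` and `1 ↦ b`: the inverse of the paper's `σ`.
noncomputable def affineToInterval (a b : ℝ) : ℝ[X] := C ((b - a) / 2) * X + C ((a + b) / 2)

theorem eval_affineToInterval (a b x : ℝ) :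
    (affineToInterval a b).eval x = (b - a) / 2 * x + (a + b) / 2 := by
  simp [affineToInterval]

theorem affineToInterval_sub_C (a b : ℝ) :
    affineToInterval a b - C a = C ((b - a) / 2) * (X + C 1) := by
  rw [affineToInterval, add_sub_assoc, ← C_sub, mul_add, C_1, mul_one]
  congr 2
  ring

theorem natDegree_comp_affineToInterval_le (a b : ℝ) (p : ℝ[X]) :
    (p.comp (affineToInterval a b)).natDegree ≤ p.natDegree := by
  calc _ ≤ p.natDegree * (affineToInterval a b).natDegree := natDegree_comp_le
    _ ≤ p.natDegree * 1 := Nat.mul_le_mul_left _ natDegree_linear_le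
    _ = p.natDegree := mul_one _

theorem OrthogonalToDegreeLT.comp_affineToInterval {a b : ℝ} {n : ℕ} {S : ℝ[X]}
    (hab : a ≠ b) (hS : OrthogonalToDegreeLT a b n S) :
    OrthogonalToDegreeLT (-1) 1 n (S.comp (affineToInterval a b)) := by
  refine OrthogonalToDegreeLT.comp_affine (div_ne_zero (sub_ne_zero.mpr hab.symm) two_ne_zero) ?_
  rwa [show (b - a) / 2 * -1 + (a + b) / 2 = a by ring,
    show (b - a) / 2 * 1 + (a + b) / 2 = b by ring]

theorem eq_C_mul_of_orthogonalToDegreeLT {a b : ℝ} (hab : a < b) {n : ℕ} {P S : ℝ[X]}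
    (hP : P.natDegree ≤ n) (hPn : P.coeff n ≠ 0) (hPorth : OrthogonalToDegreeLT a b n P)
    (hS : S.natDegree ≤ n) (hSorth : OrthogonalToDegreeLT a b n S) :
    S = C (S.coeff n / P.coeff n) * P := by
  have hlow := degree_sub_C_mul_lt hS hP hPn
  exact sub_eq_zero.mp <| eq_zero_of_integral_eval_mul_self_eq_zero hab <|
    hSorth.sub (hPorth.C_mul _) _ hlow

theorem eval_iterate_derivative_X_sq_sub_one_pow {R : Type*} [CommRing R] {j n : ℕ} (hj : j < n)
    {x : R} (hx : x ^ 2 = 1) : (derivative^[j] ((X ^ 2 - 1 : R[X]) ^ n)).eval x = 0 := by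
  obtain ⟨g, hg⟩ := pow_sub_dvd_iterate_derivative_pow (X ^ 2 - 1 : R[X]) n j
  rw [hg, eval_mul, eval_pow]
  simp [hx, Nat.sub_ne_zero_of_lt hj]

theorem monic_X_sq_sub_one {R : Type*} [CommRing R] : (X ^ 2 - 1 : R[X]).Monic := by
  simpa using monic_X_pow_sub_C (1 : R) two_ne_zero

theorem natDegree_X_sq_sub_one_pow {R : Type*} [CommRing R] [Nontrivial R] (n : ℕ) :
    ((X ^ 2 - 1 : R[X]) ^ n).natDegree = n + n := by
  have h2 : (X ^ 2 - 1 : R[X]).natDegree = 2 := by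
    simpa using natDegree_X_pow_sub_C (n := 2) (r := (1 : R))
  rw [monic_X_sq_sub_one.natDegree_pow, h2, mul_two]

theorem legendrePoly_orthogonalToDegreeLT (n : ℕ) :
    OrthogonalToDegreeLT (-1) 1 n (legendrePoly n) := by
  intro w hw
  have hbdry {x : ℝ} (hx : x ^ 2 = 1) :
      ∀ j < n, (derivative^[j] ((X ^ 2 - 1 : ℝ[X]) ^ n)).eval x = 0 :=
    fun j hj => eval_iterate_derivative_X_sq_sub_one_pow hj hx
  simp only [legendrePoly, eval_mul, eval_C, mul_assoc]
  rw [intervalIntegral.integral_const_mul, integral_iterate_derivative_eval_mul_eval _ _ _ _ _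
    (hbdry (by norm_num)) (hbdry (by norm_num)), iterate_derivative_eq_zero_of_degree_lt hw]
  simp

theorem legendrePoly_eval_neg_one (n : ℕ) : (legendrePoly n).eval (-1) = (-1) ^ n := by
  have hfactor : (X ^ 2 - 1 : ℝ[X]) ^ n = (X - C (-1)) ^ n * (X - C 1) ^ n := by
    rw [← mul_pow]; congr 1; simp; ring
  rw [legendrePoly, eval_mul, hfactor, eval_iterate_derivative_X_sub_C_pow_mul, eval_C]
  simp only [eval_pow, eval_sub, eval_X, eval_C]
  rw [show (-1 - 1 : ℝ) = 2 * -1 by norm_num, mul_pow]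
  field_simp

theorem natDegree_legendrePoly_le (n : ℕ) : (legendrePoly n).natDegree ≤ n := by
  refine (natDegree_C_mul_le _ _).trans ((natDegree_iterate_derivative _ _).trans ?_)
  rw [natDegree_X_sq_sub_one_pow, Nat.add_sub_cancel]

theorem coeff_legendrePoly_self_ne_zero (n : ℕ) : (legendrePoly n).coeff n ≠ 0 := by
  have hlead : ((X ^ 2 - 1 : ℝ[X]) ^ n).coeff (n + n) = 1 := by
    rw [← natDegree_X_sq_sub_one_pow (R := ℝ)]
    exact (monic_X_sq_sub_one.pow n).coeff_natDegree
  have hfac : (n + n).descFactorial n ≠ 0 := (Nat.descFactorial_pos.mpr (by omega)).ne'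
  rw [legendrePoly, coeff_C_mul, coeff_iterate_derivative, hlead, nsmul_eq_mul, mul_one]
  exact mul_ne_zero (by positivity) (Nat.cast_ne_zero.mpr hfac)

theorem exists_eq_C_mul_X_add_C_one_mul_of_orthogonal {q : ℕ} {Q T : ℝ[X]}
    (hQ : legendrePoly q + legendrePoly (q + 1) = (X + C 1) * Q) (hT : T.natDegree ≤ q + 1)
    (hTorth : OrthogonalToDegreeLT (-1) 1 q T) (hroot : T.eval (-1) = 0) :
    ∃ c : ℝ, T = C c * ((X + C 1) * Q) := by
  set d := T.coeff (q + 1) / (legendrePoly (q + 1)).coeff (q + 1)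
  have hlow : (T - C d * legendrePoly (q + 1)).natDegree ≤ q :=
    natDegree_le_of_degree_le <| Order.le_of_lt_succ <|
      degree_sub_C_mul_lt hT (natDegree_legendrePoly_le _) (coeff_legendrePoly_self_ne_zero _)
  set c := (T - C d * legendrePoly (q + 1)).coeff q / (legendrePoly q).coeff q
  have hc : T - C d * legendrePoly (q + 1) = C c * legendrePoly q :=
    eq_C_mul_of_orthogonalToDegreeLT (by norm_num) (natDegree_legendrePoly_le q)
      (coeff_legendrePoly_self_ne_zero q) (legendrePoly_orthogonalToDegreeLT q) hlow
      (hTorth.sub (((legendrePoly_orthogonalToDegreeLT _).mono q.le_succ).C_mul d))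
  have hTcd : T = C c * legendrePoly q + C d * legendrePoly (q + 1) := by
    rw [← hc]; ring
  have hcd : c = d := by
    have := congrArg (eval (-1)) hTcd
    simp only [eval_add, eval_mul, eval_C, legendrePoly_eval_neg_one, hroot, pow_succ] at this
    have hpow : (-1 : ℝ) ^ q ≠ 0 := pow_ne_zero _ (by norm_num)
    exact sub_eq_zero.mp (mul_left_cancel₀ hpow (by linear_combination -this))
  exact ⟨c, by rw [hTcd, ← hcd, ← hQ]; ring⟩

theorem orthogonalToDegreeLT_X_sub_C_mul_of_galerkin {a b e : ℝ} {n : ℕ} {R : ℝ[X]}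
    (h : ∀ v : ℝ[X], v.natDegree ≤ n →
      e * v.eval a + ∫ t in a..b, R.eval t * v.eval t = 0) :
    OrthogonalToDegreeLT a b n ((X - C a) * R) := by
  intro w hw
  rcases eq_or_ne w 0 with rfl | hw0
  · simp
  have hv : ((X - C a) * w).natDegree ≤ n := by
    have := (natDegree_lt_iff_degree_lt hw0).mpr hw
    refine natDegree_mul_le.trans ?_
    rw [natDegree_X_sub_C]
    omega
  have hgal := h _ hv
  rw [eval_mul, eval_sub, eval_X, eval_C, sub_self, zero_mul, mul_zero, zero_add] at hgal
  refine (integral_congr fun t _ => ?_).trans hgal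
  simp only [eval_mul, eval_sub, eval_X, eval_C]
  ring

theorem eval_eq_of_X_sub_C_mul_comp_affineToInterval_eq {a b c : ℝ} (hab : a ≠ b) {R Q : ℝ[X]}
    (h : ((X - C a) * R).comp (affineToInterval a b) = C c * ((X + C 1) * Q)) (t : ℝ) :
    R.eval t = 2 * c / (b - a) * Q.eval ((2 * t - a - b) / (b - a)) := by
  have hba : b - a ≠ 0 := sub_ne_zero.mpr hab.symm
  rw [mul_comp, sub_comp, X_comp, C_comp] at h
  have hcancel : C ((b - a) / 2) * R.comp (affineToInterval a b) = C c * Q :=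
    mul_left_cancel₀ (X_add_C_ne_zero 1)
      (by linear_combination h - R.comp (affineToInterval a b) * affineToInterval_sub_C a b)
  have ht := congrArg (eval ((2 * t - a - b) / (b - a))) hcancel
  have hinv : (b - a) / 2 * ((2 * t - a - b) / (b - a)) + (a + b) / 2 = t := by
    field_simp; ring
  simp only [eval_mul, eval_C, eval_comp, eval_affineToInterval, hinv] at ht
  field_simp
  linear_combination 2 * ht

theorem natDegree_derivative_sub_C_mul_add_C_le (U : ℝ[X]) (α β : ℝ) :
    (derivative U - (C α * U + C β)).natDegree ≤ U.natDegree :=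
  max_self U.natDegree ▸ natDegree_sub_le_of_le
    ((natDegree_derivative_le U).trans (Nat.sub_le _ _))
    (natDegree_add_le_of_degree_le (natDegree_C_mul_le _ _)
      ((natDegree_C β).trans_le U.natDegree.zero_le))

theorem mdG_residual_is_radau_general
    (a b : ℝ) (hab : a < b) (q : ℕ) (α β u_a : ℝ)
    (Q : Polynomial ℝ)
    (hQ : legendrePoly q + legendrePoly (q + 1) = (Polynomial.X + Polynomial.C 1) * Q)
    (U : Polynomial ℝ) (hU : U.natDegree ≤ q)
    (hGal : ∀ v : Polynomial ℝ, v.natDegree ≤ q →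
      (U.eval a - u_a) * v.eval a +
          ∫ t in a..b, (U.derivative.eval t - (α * U.eval t + β)) * v.eval t = 0) :
    ∃ c : ℝ, ∀ t : ℝ,
      U.derivative.eval t - (α * U.eval t + β)
        = c * Q.eval ((2 * t - a - b) / (b - a)) := by
  set R : ℝ[X] := derivative U - (C α * U + C β)
  have hR (t : ℝ) : R.eval t = U.derivative.eval t - (α * U.eval t + β) := by simp [R]
  set T := ((X - C a) * R).comp (affineToInterval a b)
  have hTorth : OrthogonalToDegreeLT (-1) 1 q T :=
    (orthogonalToDegreeLT_X_sub_C_mul_of_galerkin fun v hv => by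
      simpa only [hR] using hGal v hv).comp_affineToInterval hab.ne
  have hTdeg : T.natDegree ≤ q + 1 := by
    refine (natDegree_comp_affineToInterval_le a b _).trans (natDegree_mul_le.trans ?_)
    have : R.natDegree ≤ q := (natDegree_derivative_sub_C_mul_add_C_le U α β).trans hU
    rw [natDegree_X_sub_C]
    omega
  have hTroot : T.eval (-1) = 0 := by
    simp only [T, eval_comp, eval_mul, eval_sub, eval_X, eval_C, eval_affineToInterval]
    ring
  obtain ⟨c, hc⟩ := exists_eq_C_mul_X_add_C_one_mul_of_orthogonal hQ hTdeg hTorth hTroot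
  exact ⟨2 * c / (b - a), fun t =>
    hR t ▸ eval_eq_of_X_sub_C_mul_comp_affineToInterval_eq hab.ne hc t⟩

/-- The mdG residual is a Radau polynomial for decoupled linear right-hand sides: if `U` is a
polynomial of degree `≤ q` on `[a,b]` satisfying the discontinuous Galerkin orthogonality
`(U(a) − u_a) v(a) + ∫_a^b (U'(t) − (α U(t) + β)) v(t) dt = 0` for all polynomials `v` of
degree `≤ q`, then the residual `R(t) = U'(t) − (α U(t) + β)` is a scalar multiple of the
rescaled `q`-th Radau polynomial `Q_q = (P_q + P_{q+1})/(x+1)`. -/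
theorem mdG_residual_is_radau
    (a b : ℝ) (hab : a < b) (q : ℕ) (hq : 1 ≤ q) (α β u_a : ℝ)
    (Q : Polynomial ℝ)
    (hQ : legendrePoly q + legendrePoly (q + 1) = (Polynomial.X + Polynomial.C 1) * Q)
    (U : Polynomial ℝ) (hU : U.natDegree ≤ q)
    (hGal : ∀ v : Polynomial ℝ, v.natDegree ≤ q →
      (U.eval a - u_a) * v.eval a +
          ∫ t in a..b, (U.derivative.eval t - (α * U.eval t + β)) * v.eval t = 0) :
    ∃ c : ℝ, ∀ t : ℝ,
      U.derivative.eval t - (α * U.eval t + β)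
        = c * Q.eval ((2 * t - a - b) / (b - a)) :=
  mdG_residual_is_radau_general a b hab q α β u_a Q hQ U hU hGal
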